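/- There exists an absolute constant C > 0 such that for every measurable ω : ℝ²₊ → ℝ with 0 ≤ ω ≤ 1 a.e. and ‖ω‖₁ < ∞: (a) for every ε > 0 and every x = (x₁,x₂) ∈ ℝ²₊, |𝒢[ω](x)| ≤ C·x₂·( ε^{−1}·‖ω‖₁ + ε^{1/3}·( ∫_{(x₁−ε, x₁+ε)×(0,∞)} ω(y) dy )^{1/3} ); (b) if moreover ‖x₂ω‖₁ < ∞, then for every W > 0 the set {x ∈ ℝ²₊ : 𝒢[ω](x) − W·x₂ > 0} is bounded. -/

import Mathlib

open MeasureTheory Real Set NNReal Filter Topology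

noncomputable section

/-- The upper half plane `ℝ²₊`. -/
def H : Set (ℝ × ℝ) := {p | 0 < p.2}

/-- The half-plane Green function
`G(x,y) = (1/(4π)) log(1 + 4 x₂ y₂ / |x-y|²)` (Euclidean distance). -/
def G (x y : ℝ × ℝ) : ℝ :=
  (1 / (4 * π)) * Real.log (1 + 4 * x.2 * y.2 / ((x.1 - y.1) ^ 2 + (x.2 - y.2) ^ 2))

/-- The potential `𝒢[ω](x) = ∫_{ℝ²₊} G(x,y) ω(y) dy`. -/
def Gpot (ω : ℝ × ℝ → ℝ) (x : ℝ × ℝ) : ℝ := ∫ y in H, G x y * ω y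

/-- The kinetic energy `E(ω) = (1/2) ∫∫ G(x,y) ω(x) ω(y) dy dx`. -/
def energy (ω : ℝ × ℝ → ℝ) : ℝ :=
  (1 / 2) * ∫ x in H, ∫ y in H, G x y * ω x * ω y

/-- The `L¹(ℝ²₊)` norm (mass). -/
def norm1 (ω : ℝ × ℝ → ℝ) : ℝ := ∫ x in H, |ω x|

/-- The `L²(ℝ²₊)` norm. -/
def norm2 (ω : ℝ × ℝ → ℝ) : ℝ := (∫ x in H, ω x ^ 2) ^ ((1 : ℝ) / 2)

/-- The impulse `‖x₂ ω‖₁ = ∫_{ℝ²₊} x₂ |ω(x)| dx`. -/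
def impulse (ω : ℝ × ℝ → ℝ) : ℝ := ∫ x in H, x.2 * |ω x|

/-- `ω ∈ (L¹ ∩ L²)(ℝ²₊)`. -/
def MemL1L2 (ω : ℝ × ℝ → ℝ) : Prop :=
  Integrable ω (volume.restrict H) ∧ Integrable (fun x => ω x ^ 2) (volume.restrict H)

/-- Finiteness of the impulse `‖x₂ ω‖₁ < ∞`. -/
def ImpulseFinite (ω : ℝ × ℝ → ℝ) : Prop :=
  Integrable (fun x : ℝ × ℝ => x.2 * |ω x|) (volume.restrict H)

/-- The admissible class `K_M`: patches `ω = 1_A` a.e. on `ℝ²₊` with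
impulse `∫_A x₂ = M` and mass `|A| ≤ 1`. -/
def memK (M : ℝ) (ω : ℝ × ℝ → ℝ) : Prop :=
  Integrable ω (volume.restrict H) ∧
  ∃ A : Set (ℝ × ℝ), A ⊆ H ∧ MeasurableSet A ∧
    (∀ᵐ x ∂volume.restrict H, ω x = A.indicator (fun _ => (1 : ℝ)) x) ∧
    (∫ x in A, x.2) = M ∧ volume A ≤ 1

/-- The admissible class `K_{M,∞}`: patches `ω = 1_A` a.e. on `ℝ²₊` with
impulse `∫_A x₂ = M`, without any mass bound. -/
def memKinf (M : ℝ) (ω : ℝ × ℝ → ℝ) : Prop :=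
  Integrable ω (volume.restrict H) ∧
  ∃ A : Set (ℝ × ℝ), A ⊆ H ∧ MeasurableSet A ∧
    (∀ᵐ x ∂volume.restrict H, ω x = A.indicator (fun _ => (1 : ℝ)) x) ∧
    (∫ x in A, x.2) = M

/-- The relaxed admissible class `K̃_M`: measurable `0 ≤ ω ≤ 1` with
mass `≤ 1` and impulse `≤ M`. -/
def memKt (M : ℝ) (ω : ℝ × ℝ → ℝ) : Prop :=
  Integrable ω (volume.restrict H) ∧
  (∀ᵐ x ∂volume.restrict H, 0 ≤ ω x ∧ ω x ≤ 1) ∧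
  norm1 ω ≤ 1 ∧
  Integrable (fun x : ℝ × ℝ => x.2 * |ω x|) (volume.restrict H) ∧
  impulse ω ≤ M

/-- The set of maximizers `S_M` of the energy over `K_M`. -/
def memS (M : ℝ) (ω : ℝ × ℝ → ℝ) : Prop :=
  memK M ω ∧ ∀ ω' : ℝ × ℝ → ℝ, memK M ω' → energy ω' ≤ energy ω

/-- The maximal energy `I_M` over `K_M`. -/
def Isup (M : ℝ) : ℝ := sSup (energy '' {ω | memK M ω})

/-- The maximal energy `I_{1,∞}` over `K_{1,∞}`. -/
def IsupInf : ℝ := sSup (energy '' {ω | memKinf 1 ω})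

/-- The Steiner symmetry condition for a set `Ω ⊆ ℝ²₊`. -/
def SteinerSet (Ω : Set (ℝ × ℝ)) : Prop :=
  (∀ x₁ x₂ : ℝ, 0 < x₂ → (((x₁, x₂) : ℝ × ℝ) ∈ Ω ↔ ((-x₁, x₂) : ℝ × ℝ) ∈ Ω)) ∧
  (∀ x₂ : ℝ, 0 < x₂ → ∀ a b : ℝ, 0 ≤ a → a ≤ b →
    ((b, x₂) : ℝ × ℝ) ∈ Ω → ((a, x₂) : ℝ × ℝ) ∈ Ω)

/-- The Steiner symmetry condition for a nonnegative function on `ℝ²₊`. -/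
def SteinerFn (f : ℝ × ℝ → ℝ) : Prop :=
  (∀ x₁ x₂ : ℝ, 0 < x₂ → f (x₁, x₂) = f (-x₁, x₂)) ∧
  (∀ x₂ : ℝ, 0 < x₂ → ∀ a b : ℝ, 0 ≤ a → a ≤ b → f (b, x₂) ≤ f (a, x₂))


open Metric ENNReal

lemma aux12_H_meas : MeasurableSet H := measurableSet_lt measurable_const measurable_snd

lemma aux12_G_nonneg {x y : ℝ × ℝ} (hx : x ∈ H) (hy : y ∈ H) : 0 ≤ G x y := by
  have hx2 : 0 < x.2 := hx
  have hy2 : 0 < y.2 := hy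
  have h1 : 0 ≤ 4 * x.2 * y.2 / ((x.1 - y.1) ^ 2 + (x.2 - y.2) ^ 2) := by positivity
  have := Real.log_nonneg (by linarith : (1:ℝ) ≤ 1 + 4 * x.2 * y.2 / ((x.1 - y.1) ^ 2 + (x.2 - y.2) ^ 2))
  have hpi : 0 < π := Real.pi_pos
  unfold G; positivity

lemma aux12_G_le {x y : ℝ × ℝ} (hx : x ∈ H) (hy : y ∈ H) : G x y ≤ x.2 / dist x y := by
  have hx2 : 0 < x.2 := hx
  have hy2 : 0 < y.2 := hy
  rcases eq_or_ne y x with rfl | hne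
  · simp [G, dist_self]
  have hr : 0 < dist x y := dist_pos.2 (Ne.symm hne)
  set r := dist x y with hrdef
  have hdist : r = max (dist x.1 y.1) (dist x.2 y.2) := Prod.dist_eq
  have hd1 : dist x.1 y.1 ≤ r := by rw [hdist]; exact le_max_left _ _
  have hd2 : dist x.2 y.2 ≤ r := by rw [hdist]; exact le_max_right _ _
  have hb2 : |x.2 - y.2| ≤ r := by rwa [Real.dist_eq] at hd2
  have hy2le : y.2 ≤ x.2 + r := by
    have := abs_sub_le_iff.1 hb2
    linarith [this.2]
  have hrE : r ^ 2 ≤ (x.1 - y.1) ^ 2 + (x.2 - y.2) ^ 2 := by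
    rw [hdist]
    rcases max_cases (dist x.1 y.1) (dist x.2 y.2) with ⟨h, _⟩ | ⟨h, _⟩ <;> rw [h] <;>
      rw [Real.dist_eq] <;> nlinarith [sq_nonneg (x.1 - y.1), sq_nonneg (x.2 - y.2), sq_abs (x.1 - y.1), sq_abs (x.2 - y.2)]
  have hEpos : 0 < (x.1 - y.1) ^ 2 + (x.2 - y.2) ^ 2 := by nlinarith
  set b := x.2 / r with hb
  have hbpos : 0 < b := by positivity
  have ht : 4 * x.2 * y.2 / ((x.1 - y.1) ^ 2 + (x.2 - y.2) ^ 2) ≤ 4 * b * (b + 1) := by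
    have h1 : 4 * x.2 * y.2 / ((x.1 - y.1) ^ 2 + (x.2 - y.2) ^ 2) ≤ 4 * x.2 * y.2 / r ^ 2 :=
      div_le_div_of_nonneg_left (by positivity) (by positivity) hrE
    have h2 : 4 * x.2 * y.2 / r ^ 2 ≤ 4 * x.2 * (x.2 + r) / r ^ 2 := by
      apply div_le_div_of_nonneg_right ?_ (by positivity)
      nlinarith
    have h3 : 4 * x.2 * (x.2 + r) / r ^ 2 = 4 * b * (b + 1) := by
      rw [hb]
      field_simp
    linarith
  set t := 4 * x.2 * y.2 / ((x.1 - y.1) ^ 2 + (x.2 - y.2) ^ 2) with htd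
  have htnn : 0 ≤ t := by positivity
  have hlog : Real.log (1 + t) ≤ 11 * b := by
    rcases le_or_gt b 1 with hb1 | hb1
    · have : Real.log (1 + t) ≤ t := by
        have := Real.log_le_sub_one_of_pos (by linarith : (0:ℝ) < 1 + t)
        linarith
      nlinarith
    · have h9 : 1 + t ≤ 9 * b ^ 2 := by nlinarith
      have hl : Real.log (1 + t) ≤ Real.log (9 * b ^ 2) :=
        Real.log_le_log (by linarith) h9
      have h9l : Real.log (9 * b ^ 2) = Real.log 9 + 2 * Real.log b := by
        rw [Real.log_mul (by norm_num) (by positivity), Real.log_pow]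
        push_cast; ring
      have hlog9 : Real.log 9 ≤ 8 := by
        have := Real.log_le_sub_one_of_pos (by norm_num : (0:ℝ) < 9)
        linarith
      have hlb : Real.log b ≤ b := by
        have := Real.log_le_sub_one_of_pos (by linarith : (0:ℝ) < b)
        linarith
      nlinarith
  have hpi : (11:ℝ) ≤ 4 * π := by nlinarith [Real.pi_gt_three]
  have hlognn : 0 ≤ Real.log (1 + t) := Real.log_nonneg (by linarith)
  have : G x y = (1 / (4 * π)) * Real.log (1 + t) := rfl
  rw [this, hb] at *
  rw [div_eq_mul_inv x.2 r] at hb ⊢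
  calc (1 / (4 * π)) * Real.log (1 + t) ≤ (1 / 11) * (11 * (x.2 * r⁻¹)) := by
        apply mul_le_mul ?_ ?_ hlognn (by norm_num)
        · rw [div_le_div_iff₀ (by nlinarith [Real.pi_gt_three]) (by norm_num)]
          linarith
        · exact hlog
    _ = x.2 * r⁻¹ := by ring

open ENNReal in
lemma aux12_volume_singleton_R2 (x : ℝ × ℝ) : volume ({x} : Set (ℝ × ℝ)) = 0 := by
  have : ({x} : Set (ℝ × ℝ)) = {x.1} ×ˢ {x.2} := by
    ext y; simp [Prod.ext_iff]
  rw [this, MeasureTheory.Measure.volume_eq_prod, MeasureTheory.Measure.prod_prod]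
  simp

open ENNReal in
lemma aux12_lint_ball (x : ℝ × ℝ) (c ρ : ℝ) (hc : 0 ≤ c) (hρ : 0 < ρ) :
    ∫⁻ y in Metric.ball x ρ, ENNReal.ofReal (c / dist x y) ≤ ENNReal.ofReal (16 * c * ρ) := by
  set A : ℕ → Set (ℝ × ℝ) := fun k => Metric.ball x (ρ / 2 ^ k) \ Metric.ball x (ρ / 2 ^ (k + 1))
    with hA
  have hsub : Metric.ball x ρ \ {x} ⊆ ⋃ k, A k := by
    intro y hy
    obtain ⟨hyb, hyx⟩ := hy
    have hd : 0 < dist y x := dist_pos.2 hyx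
    have hdr : dist y x < ρ := Metric.mem_ball.1 hyb
    have hex : ∃ n : ℕ, ρ ≤ dist y x * 2 ^ (n + 1) := by
      obtain ⟨n, hn⟩ := pow_unbounded_of_one_lt (ρ / dist y x) (by norm_num : (1:ℝ) < 2)
      refine ⟨n, ?_⟩
      rw [div_lt_iff₀ hd] at hn
      have : ((2:ℝ))^(n+1) = 2^n * 2 := by ring
      nlinarith [pow_pos (by norm_num : (0:ℝ)<2) n]
    set k := Nat.find hex with hk
    have hk1 : ρ ≤ dist y x * 2 ^ (k + 1) := Nat.find_spec hex
    have hk2 : dist y x < ρ / 2 ^ k := by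
      rcases Nat.eq_zero_or_pos k with h0 | hpos
      · rw [h0]; simpa using hdr
      · obtain ⟨j, hj⟩ := Nat.exists_eq_succ_of_ne_zero hpos.ne'
        have hjlt : j < Nat.find hex := by omega
        have hmin := Nat.find_min hex hjlt
        push_neg at hmin
        rw [lt_div_iff₀ (by positivity), hj]
        exact hmin
    refine mem_iUnion.2 ⟨k, ⟨Metric.mem_ball.2 hk2, ?_⟩⟩
    simp only [Metric.mem_ball, not_lt]
    rw [div_le_iff₀ (by positivity)]
    exact hk1
  have hae : Metric.ball x ρ =ᵐ[(volume : Measure (ℝ × ℝ))]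
      (Metric.ball x ρ \ ({x} : Set (ℝ × ℝ))) := by
    refine (MeasureTheory.diff_ae_eq_self.2 ?_).symm
    exact measure_mono_null Set.inter_subset_right (aux12_volume_singleton_R2 x)
  calc ∫⁻ y in Metric.ball x ρ, ENNReal.ofReal (c / dist x y)
      = ∫⁻ y in Metric.ball x ρ \ {x}, ENNReal.ofReal (c / dist x y) := by
        exact MeasureTheory.setLIntegral_congr hae
    _ ≤ ∫⁻ y in ⋃ k, A k, ENNReal.ofReal (c / dist x y) :=
        MeasureTheory.lintegral_mono_set hsub
    _ ≤ ∑' k, ∫⁻ y in A k, ENNReal.ofReal (c / dist x y) :=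
        MeasureTheory.lintegral_iUnion_le _ _
    _ ≤ ∑' k, ENNReal.ofReal (8 * c * ρ) * (ENNReal.ofReal (1/2)) ^ k := by
        refine ENNReal.tsum_le_tsum fun k => ?_
        have hbound : ∀ y ∈ A k, ENNReal.ofReal (c / dist x y) ≤
            ENNReal.ofReal (c * 2 ^ (k+1) / ρ) := by
          intro y hy
          apply ENNReal.ofReal_le_ofReal
          have hdy : ρ / 2 ^ (k+1) ≤ dist x y := by
            have := hy.2
            simp only [Metric.mem_ball, not_lt] at this
            rwa [dist_comm]
          have hpos : (0:ℝ) < ρ / 2 ^ (k+1) := by positivity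
          rw [div_le_div_iff₀ (lt_of_lt_of_le hpos hdy) (by positivity : (0:ℝ) < ρ)]
          calc c * ρ ≤ c * (dist x y * 2 ^ (k+1)) := by
                have : ρ ≤ dist x y * 2 ^ (k+1) := by
                  rw [div_le_iff₀ (by positivity : (0:ℝ) < (2:ℝ)^(k+1))] at hdy
                  linarith
                nlinarith
            _ = c * 2 ^ (k+1) * dist x y := by ring
        calc ∫⁻ y in A k, ENNReal.ofReal (c / dist x y)
            ≤ ∫⁻ _ in A k, ENNReal.ofReal (c * 2 ^ (k+1) / ρ) := by
              apply MeasureTheory.setLIntegral_mono' (by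
                exact (measurableSet_ball).diff measurableSet_ball) hbound
          _ = ENNReal.ofReal (c * 2 ^ (k+1) / ρ) * volume (A k) := by
              rw [MeasureTheory.setLIntegral_const]
          _ ≤ ENNReal.ofReal (c * 2 ^ (k+1) / ρ) * volume (Metric.ball x (ρ / 2 ^ k)) := by
              exact mul_le_mul_right (measure_mono diff_subset) _
          _ ≤ ENNReal.ofReal (8 * c * ρ) * (ENNReal.ofReal (1/2)) ^ k := by
              have hball : volume (Metric.ball x (ρ / 2 ^ k)) =
                  ENNReal.ofReal (2 * (ρ / 2 ^ k)) * ENNReal.ofReal (2 * (ρ / 2 ^ k)) := by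
                rw [← ball_prod_same, MeasureTheory.Measure.volume_eq_prod,
                  MeasureTheory.Measure.prod_prod, Real.volume_ball, Real.volume_ball]
              rw [hball, ← ENNReal.ofReal_mul (by positivity), ← ENNReal.ofReal_mul (by positivity),
                ← ENNReal.ofReal_pow (by norm_num), ← ENNReal.ofReal_mul (by positivity)]
              apply ENNReal.ofReal_le_ofReal
              apply le_of_eq
              have h2 : ((2:ℝ))^k ≠ 0 := by positivity
              field_simp
              rw [div_pow, one_pow]
              field_simp
              ring
    _ = ENNReal.ofReal (8 * c * ρ) * ∑' k : ℕ, (ENNReal.ofReal (1/2)) ^ k :=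
        ENNReal.tsum_mul_left
    _ ≤ ENNReal.ofReal (16 * c * ρ) := by
        rw [ENNReal.tsum_geometric]
        have : ENNReal.ofReal (1/2 : ℝ) = (2:ℝ≥0∞)⁻¹ := by
          rw [show (1:ℝ)/2 = (2:ℝ)⁻¹ by norm_num, ENNReal.ofReal_inv_of_pos (by norm_num)]
          norm_num
        rw [this]
        have h12 : (1:ℝ≥0∞) - 2⁻¹ = 2⁻¹ := ENNReal.one_sub_inv_two
        have hii : ((2:ℝ≥0∞)⁻¹)⁻¹ = 2 := by simp
        rw [h12, hii, ← ENNReal.ofReal_ofNat 2, ← ENNReal.ofReal_mul (by positivity)]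
        exact ENNReal.ofReal_le_ofReal (le_of_eq (by ring))


lemma aux12_G_meas (x : ℝ × ℝ) : Measurable (fun y => G x y) := by
  unfold G
  apply Measurable.const_mul
  apply Real.measurable_log.comp
  apply Measurable.const_add
  apply Measurable.div
  · fun_prop
  · fun_prop

lemma aux12_norm1_nonneg (ω : ℝ × ℝ → ℝ) : 0 ≤ norm1 ω :=
  MeasureTheory.integral_nonneg fun y => abs_nonneg _

lemma aux12_Gpot_main (ω : ℝ × ℝ → ℝ) (hmeas : Measurable ω)
    (hbd : ∀ᵐ x ∂volume.restrict H, 0 ≤ ω x ∧ ω x ≤ 1)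
    (hInt : Integrable ω (volume.restrict H))
    {x : ℝ × ℝ} (hx : x ∈ H) {δ ρ : ℝ} (hδ : 0 < δ) (hρ : 0 < ρ) :
    |Gpot ω x| ≤ x.2 / δ * norm1 ω + 16 * x.2 * ρ +
      x.2 / ρ * ∫ y in H ∩ Metric.ball x δ, ω y := by
  have hx2 : 0 < x.2 := hx
  set f : ℝ × ℝ → ℝ≥0∞ := fun y => ENNReal.ofReal (G x y * ω y) with hf
  set B := Metric.ball x δ with hB
  set Bρ := Metric.ball x ρ with hBρ
  set mB := ∫ y in H ∩ B, ω y with hmB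
  have hbdnn : ∀ᵐ y ∂volume.restrict H, 0 ≤ ω y := hbd.mono fun y h => h.1
  have hbdnnB : ∀ᵐ y ∂volume.restrict (H ∩ B), 0 ≤ ω y :=
    MeasureTheory.ae_restrict_of_ae_restrict_of_subset Set.inter_subset_left hbdnn
  have hmBnn : 0 ≤ mB :=
    MeasureTheory.setIntegral_nonneg_of_ae_restrict hbdnnB
  have hIntB : MeasureTheory.IntegrableOn ω (H ∩ B) volume :=
    MeasureTheory.IntegrableOn.mono_set hInt Set.inter_subset_left
  -- representation via lintegral
  have h0 : 0 ≤ᵐ[volume.restrict H] fun y => G x y * ω y := by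
    filter_upwards [hbd, MeasureTheory.ae_restrict_mem aux12_H_meas] with y hy hyH
    exact mul_nonneg (aux12_G_nonneg hx hyH) hy.1
  have hfm : Measurable fun y => G x y * ω y := (aux12_G_meas x).mul hmeas
  have hrepr : Gpot ω x = (∫⁻ y in H, f y).toReal :=
    MeasureTheory.integral_eq_lintegral_of_nonneg_ae h0 hfm.aestronglyMeasurable
  -- splitting
  have hdisj1 : Disjoint (H ∩ B) (H \ B) :=
    Disjoint.mono_left Set.inter_subset_right disjoint_sdiff_self_right
  have hsplit1 : ∫⁻ y in H, f y = (∫⁻ y in H ∩ B, f y) + ∫⁻ y in H \ B, f y := by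
    rw [← MeasureTheory.lintegral_union (aux12_H_meas.diff measurableSet_ball) hdisj1,
      Set.inter_union_diff]
  have hdisj2 : Disjoint (H ∩ B ∩ Bρ) ((H ∩ B) \ Bρ) :=
    Disjoint.mono_left Set.inter_subset_right disjoint_sdiff_self_right
  have hsplit2 : ∫⁻ y in H ∩ B, f y =
      (∫⁻ y in H ∩ B ∩ Bρ, f y) + ∫⁻ y in (H ∩ B) \ Bρ, f y := by
    rw [← MeasureTheory.lintegral_union ((aux12_H_meas.inter measurableSet_ball).diff
      measurableSet_ball) hdisj2, Set.inter_union_diff]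
  -- far bound
  have hfar : ∫⁻ y in H \ B, f y ≤ ENNReal.ofReal (x.2 / δ * norm1 ω) := by
    calc ∫⁻ y in H \ B, f y
        ≤ ∫⁻ y in H \ B, ENNReal.ofReal (x.2 / δ) * ENNReal.ofReal |ω y| := by
          apply MeasureTheory.lintegral_mono_ae
          filter_upwards [MeasureTheory.ae_restrict_of_ae_restrict_of_subset
            Set.diff_subset hbd, MeasureTheory.ae_restrict_mem (aux12_H_meas.diff measurableSet_ball)]
            with y hy hyd
          rw [← ENNReal.ofReal_mul (by positivity)]
          apply ENNReal.ofReal_le_ofReal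
          have hdxy : δ ≤ dist x y := by
            have := hyd.2
            simp only [hB, Metric.mem_ball, not_lt] at this
            rwa [dist_comm]
          have hG : G x y ≤ x.2 / δ := le_trans (aux12_G_le hx hyd.1)
            (div_le_div_of_nonneg_left hx2.le hδ hdxy)
          calc G x y * ω y ≤ (x.2 / δ) * ω y :=
                mul_le_mul_of_nonneg_right hG hy.1
            _ ≤ (x.2 / δ) * |ω y| :=
                mul_le_mul_of_nonneg_left (le_abs_self _) (by positivity)
      _ = ENNReal.ofReal (x.2 / δ) * ∫⁻ y in H \ B, ENNReal.ofReal |ω y| :=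
          MeasureTheory.lintegral_const_mul _ (hmeas.abs.ennreal_ofReal)
      _ ≤ ENNReal.ofReal (x.2 / δ) * ∫⁻ y in H, ENNReal.ofReal |ω y| :=
          mul_le_mul_right (MeasureTheory.lintegral_mono_set Set.diff_subset) _
      _ = ENNReal.ofReal (x.2 / δ) * ENNReal.ofReal (norm1 ω) := by
          rw [← MeasureTheory.ofReal_integral_eq_lintegral_ofReal hInt.abs
            (Filter.Eventually.of_forall fun y => abs_nonneg _)]
          rfl
      _ = ENNReal.ofReal (x.2 / δ * norm1 ω) := by
          rw [← ENNReal.ofReal_mul (by positivity)]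
  -- inner ball bound
  have hnear1 : ∫⁻ y in H ∩ B ∩ Bρ, f y ≤ ENNReal.ofReal (16 * x.2 * ρ) := by
    calc ∫⁻ y in H ∩ B ∩ Bρ, f y
        ≤ ∫⁻ y in H ∩ B ∩ Bρ, ENNReal.ofReal (x.2 / dist x y) := by
          apply MeasureTheory.lintegral_mono_ae
          filter_upwards [MeasureTheory.ae_restrict_of_ae_restrict_of_subset
            (Set.inter_subset_left.trans Set.inter_subset_left) hbd,
            MeasureTheory.ae_restrict_mem ((aux12_H_meas.inter measurableSet_ball).inter
              measurableSet_ball)] with y hy hyd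
          apply ENNReal.ofReal_le_ofReal
          calc G x y * ω y ≤ G x y * 1 :=
                mul_le_mul_of_nonneg_left hy.2 (aux12_G_nonneg hx hyd.1.1)
            _ = G x y := mul_one _
            _ ≤ x.2 / dist x y := aux12_G_le hx hyd.1.1
      _ ≤ ∫⁻ y in Bρ, ENNReal.ofReal (x.2 / dist x y) :=
          MeasureTheory.lintegral_mono_set Set.inter_subset_right
      _ ≤ ENNReal.ofReal (16 * x.2 * ρ) := aux12_lint_ball x x.2 ρ hx2.le hρ
  -- middle bound
  have hnear2 : ∫⁻ y in (H ∩ B) \ Bρ, f y ≤ ENNReal.ofReal (x.2 / ρ * mB) := by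
    calc ∫⁻ y in (H ∩ B) \ Bρ, f y
        ≤ ∫⁻ y in (H ∩ B) \ Bρ, ENNReal.ofReal (x.2 / ρ) * ENNReal.ofReal (ω y) := by
          apply MeasureTheory.lintegral_mono_ae
          filter_upwards [MeasureTheory.ae_restrict_of_ae_restrict_of_subset
            (Set.diff_subset.trans Set.inter_subset_left) hbd,
            MeasureTheory.ae_restrict_mem ((aux12_H_meas.inter measurableSet_ball).diff
              measurableSet_ball)] with y hy hyd
          rw [← ENNReal.ofReal_mul (by positivity)]
          apply ENNReal.ofReal_le_ofReal
          have hdxy : ρ ≤ dist x y := by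
            have := hyd.2
            simp only [hBρ, Metric.mem_ball, not_lt] at this
            rwa [dist_comm]
          have hG : G x y ≤ x.2 / ρ := le_trans (aux12_G_le hx hyd.1.1)
            (div_le_div_of_nonneg_left hx2.le hρ hdxy)
          exact mul_le_mul_of_nonneg_right hG hy.1
      _ = ENNReal.ofReal (x.2 / ρ) * ∫⁻ y in (H ∩ B) \ Bρ, ENNReal.ofReal (ω y) :=
          MeasureTheory.lintegral_const_mul _ (hmeas.ennreal_ofReal)
      _ ≤ ENNReal.ofReal (x.2 / ρ) * ∫⁻ y in H ∩ B, ENNReal.ofReal (ω y) :=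
          mul_le_mul_right (MeasureTheory.lintegral_mono_set Set.diff_subset) _
      _ = ENNReal.ofReal (x.2 / ρ) * ENNReal.ofReal mB := by
          rw [hmB, MeasureTheory.ofReal_integral_eq_lintegral_ofReal hIntB hbdnnB]
      _ = ENNReal.ofReal (x.2 / ρ * mB) := by
          rw [← ENNReal.ofReal_mul (by positivity)]
  -- combine
  have htotal : ∫⁻ y in H, f y ≤
      ENNReal.ofReal (x.2 / δ * norm1 ω + 16 * x.2 * ρ + x.2 / ρ * mB) := by
    rw [hsplit1, hsplit2]
    have e1 : (0:ℝ) ≤ x.2 / δ * norm1 ω := mul_nonneg (by positivity) (aux12_norm1_nonneg ω)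
    have e2 : (0:ℝ) ≤ 16 * x.2 * ρ := by positivity
    have e3 : (0:ℝ) ≤ x.2 / ρ * mB := mul_nonneg (by positivity) hmBnn
    rw [ENNReal.ofReal_add (by linarith) e3, ENNReal.ofReal_add e1 e2]
    calc (∫⁻ y in H ∩ B ∩ Bρ, f y) + (∫⁻ y in (H ∩ B) \ Bρ, f y) + ∫⁻ y in H \ B, f y
        ≤ ENNReal.ofReal (16 * x.2 * ρ) + ENNReal.ofReal (x.2 / ρ * mB) +
          ENNReal.ofReal (x.2 / δ * norm1 ω) :=
          add_le_add (add_le_add hnear1 hnear2) hfar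
      _ = ENNReal.ofReal (x.2 / δ * norm1 ω) + ENNReal.ofReal (16 * x.2 * ρ) +
          ENNReal.ofReal (x.2 / ρ * mB) := by ring
  rw [hrepr, abs_of_nonneg ENNReal.toReal_nonneg]
  calc (∫⁻ y in H, f y).toReal
      ≤ (ENNReal.ofReal (x.2 / δ * norm1 ω + 16 * x.2 * ρ + x.2 / ρ * mB)).toReal :=
        ENNReal.toReal_mono ENNReal.ofReal_ne_top htotal
    _ ≤ x.2 / δ * norm1 ω + 16 * x.2 * ρ + x.2 / ρ * mB := by
        apply le_of_eq
        apply ENNReal.toReal_ofReal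
        have e1 : (0:ℝ) ≤ x.2 / δ * norm1 ω := mul_nonneg (by positivity) (aux12_norm1_nonneg ω)
        have e3 : (0:ℝ) ≤ x.2 / ρ * mB := mul_nonneg (by positivity) hmBnn
        positivity


lemma aux12_young {m ε : ℝ} (hm : 0 < m) (hε : 0 < ε) :
    Real.sqrt m ≤ ε⁻¹ * m + ε ^ ((1:ℝ)/3) * m ^ ((1:ℝ)/3) := by
  rcases le_or_gt m (ε ^ 2) with h | h
  · have h1 : Real.sqrt m = m ^ ((1:ℝ)/3) * m ^ ((1:ℝ)/6) := by
      rw [Real.sqrt_eq_rpow, ← Real.rpow_add hm]; norm_num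
    have h2 : m ^ ((1:ℝ)/6) ≤ ε ^ ((1:ℝ)/3) := by
      calc m ^ ((1:ℝ)/6) ≤ (ε ^ 2) ^ ((1:ℝ)/6) := Real.rpow_le_rpow hm.le h (by norm_num)
        _ = ε ^ ((1:ℝ)/3) := by
          rw [← Real.rpow_natCast ε 2, ← Real.rpow_mul hε.le]; norm_num
    have h3 : (0:ℝ) ≤ ε⁻¹ * m := by positivity
    have h4 : m ^ ((1:ℝ)/3) * m ^ ((1:ℝ)/6) ≤ m ^ ((1:ℝ)/3) * ε ^ ((1:ℝ)/3) :=
      mul_le_mul_of_nonneg_left h2 (Real.rpow_nonneg hm.le _)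
    rw [h1]
    nlinarith [h4]
  · have hs : ε ≤ Real.sqrt m := by
      rw [show ε = Real.sqrt (ε ^ 2) by rw [Real.sqrt_sq hε.le]]
      exact Real.sqrt_le_sqrt h.le
    have h5 : Real.sqrt m = m / Real.sqrt m := (Real.div_sqrt).symm
    have h6 : m / Real.sqrt m ≤ m / ε := div_le_div_of_nonneg_left hm.le hε hs
    have h7 : (0:ℝ) ≤ ε ^ ((1:ℝ)/3) * m ^ ((1:ℝ)/3) := by positivity
    have h8 : m / ε = ε⁻¹ * m := by ring
    linarith

lemma aux12_partA (ω : ℝ × ℝ → ℝ) (hmeas : Measurable ω)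
    (hbd : ∀ᵐ x ∂volume.restrict H, 0 ≤ ω x ∧ ω x ≤ 1)
    (hInt : Integrable ω (volume.restrict H))
    {ε : ℝ} (hε : 0 < ε) {x : ℝ × ℝ} (hx : x ∈ H) :
    |Gpot ω x| ≤ 18 * x.2 * (ε⁻¹ * norm1 ω +
      ε ^ ((1 : ℝ) / 3) *
        (∫ y in (Set.Ioo (x.1 - ε) (x.1 + ε)) ×ˢ (Set.Ioi (0 : ℝ)), ω y) ^ ((1 : ℝ) / 3)) := by
  have hx2 : 0 < x.2 := hx
  set S := (Set.Ioo (x.1 - ε) (x.1 + ε)) ×ˢ (Set.Ioi (0 : ℝ)) with hS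
  set m := ∫ y in S, ω y with hm
  set N := norm1 ω with hN
  have hSH : S ⊆ H := fun y hy => hy.2
  have hSmeas : MeasurableSet S := measurableSet_Ioo.prod measurableSet_Ioi
  have hIntS : MeasureTheory.IntegrableOn ω S volume :=
    MeasureTheory.IntegrableOn.mono_set hInt hSH
  have hbdnn : ∀ᵐ y ∂volume.restrict H, 0 ≤ ω y := hbd.mono fun y h => h.1
  have hbdnnS : ∀ᵐ y ∂volume.restrict S, 0 ≤ ω y :=
    MeasureTheory.ae_restrict_of_ae_restrict_of_subset hSH hbdnn
  have hmnn : 0 ≤ m := MeasureTheory.setIntegral_nonneg_of_ae_restrict hbdnnS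
  have hballS : H ∩ Metric.ball x ε ⊆ S := by
    intro y hy
    obtain ⟨hyH, hyB⟩ := hy
    have hd : dist y x < ε := Metric.mem_ball.1 hyB
    have hd1 : dist y.1 x.1 < ε :=
      lt_of_le_of_lt (le_trans (le_max_left _ _) (le_of_eq Prod.dist_eq.symm)) hd
    rw [Real.dist_eq, abs_sub_lt_iff] at hd1
    exact ⟨⟨by linarith [hd1.2], by linarith [hd1.1]⟩, hyH⟩
  have hmB_le : (∫ y in H ∩ Metric.ball x ε, ω y) ≤ m := by
    apply MeasureTheory.setIntegral_mono_set hIntS hbdnnS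
    exact Filter.Eventually.of_forall hballS
  have hmN : m ≤ N := by
    calc m ≤ ∫ y in S, |ω y| :=
          MeasureTheory.integral_mono_ae hIntS hIntS.abs
            (Filter.Eventually.of_forall fun y => le_abs_self _)
      _ ≤ ∫ y in H, |ω y| := by
          apply MeasureTheory.setIntegral_mono_set hInt.abs
            (Filter.Eventually.of_forall fun y => abs_nonneg _)
            (Filter.Eventually.of_forall hSH)
      _ = N := rfl
  have hBnn : (0:ℝ) ≤ ε ^ ((1:ℝ)/3) * m ^ ((1:ℝ)/3) := by positivity
  rcases eq_or_lt_of_le hmnn with hm0 | hm0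
  · -- m = 0
    have hmB0 : (∫ y in H ∩ Metric.ball x ε, ω y) = 0 := by
      have h1 : 0 ≤ (∫ y in H ∩ Metric.ball x ε, ω y) :=
        MeasureTheory.setIntegral_nonneg_of_ae_restrict
          (MeasureTheory.ae_restrict_of_ae_restrict_of_subset Set.inter_subset_left hbdnn)
      linarith [hmB_le, hm0.symm.le]
    have key : |Gpot ω x| ≤ x.2 / ε * N := by
      apply _root_.le_of_forall_pos_le_add
      intro e he
      have hρ : 0 < e / (16 * x.2) := by positivity
      have := aux12_Gpot_main ω hmeas hbd hInt hx hε hρ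
      rw [hmB0] at this
      calc |Gpot ω x| ≤ x.2 / ε * N + 16 * x.2 * (e / (16 * x.2)) + x.2 / (e / (16 * x.2)) * 0 :=
            this
        _ = x.2 / ε * N + e := by field_simp; ring
    calc |Gpot ω x| ≤ x.2 / ε * N := key
      _ ≤ 18 * x.2 * (ε⁻¹ * N + ε ^ ((1:ℝ)/3) * m ^ ((1:ℝ)/3)) := by
          have hNn : 0 ≤ N := aux12_norm1_nonneg ω
          have h1 : x.2 / ε * N = x.2 * (ε⁻¹ * N) := by ring
          nlinarith [mul_nonneg hx2.le (mul_nonneg (inv_nonneg.2 hε.le) hNn), mul_nonneg hx2.le hBnn]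
  · -- m > 0
    have hρ : 0 < Real.sqrt m := Real.sqrt_pos.2 hm0
    have hmain := aux12_Gpot_main ω hmeas hbd hInt hx hε hρ
    have h1 : x.2 / Real.sqrt m * (∫ y in H ∩ Metric.ball x ε, ω y) ≤ x.2 * Real.sqrt m := by
      calc x.2 / Real.sqrt m * (∫ y in H ∩ Metric.ball x ε, ω y)
          ≤ x.2 / Real.sqrt m * m := mul_le_mul_of_nonneg_left hmB_le (by positivity)
        _ = x.2 * (m / Real.sqrt m) := by ring
        _ = x.2 * Real.sqrt m := by rw [Real.div_sqrt]
    have h2 := aux12_young hm0 hε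
    have hNn : 0 ≤ N := aux12_norm1_nonneg ω
    have h3 : x.2 * Real.sqrt m ≤ x.2 * (ε⁻¹ * m + ε ^ ((1:ℝ)/3) * m ^ ((1:ℝ)/3)) :=
      mul_le_mul_of_nonneg_left h2 hx2.le
    have h4 : x.2 * (ε⁻¹ * m) ≤ x.2 * (ε⁻¹ * N) := by
      apply mul_le_mul_of_nonneg_left ?_ hx2.le
      exact mul_le_mul_of_nonneg_left hmN (inv_nonneg.2 hε.le)
    have h5 : 0 ≤ x.2 * (ε⁻¹ * N) := by positivity
    have h6 : 0 ≤ x.2 * (ε ^ ((1:ℝ)/3) * m ^ ((1:ℝ)/3)) := mul_nonneg hx2.le hBnn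
    set s := Real.sqrt m with hs
    set B := ε ^ ((1:ℝ)/3) * m ^ ((1:ℝ)/3) with hBd
    have h7 : |Gpot ω x| ≤ x.2 / ε * N + 17 * (x.2 * s) := by
      have : x.2 / s * (∫ y in H ∩ Metric.ball x ε, ω y) ≤ x.2 * s := h1
      linarith [hmain]
    have h8 : 17 * (x.2 * s) ≤ 17 * (x.2 * (ε⁻¹ * m)) + 17 * (x.2 * B) := by
      have := h3
      nlinarith [h3]
    have h9 : x.2 / ε * N = x.2 * (ε⁻¹ * N) := by ring
    have h10 : 18 * x.2 * (ε⁻¹ * N + B) =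
        18 * (x.2 * (ε⁻¹ * N)) + 18 * (x.2 * B) := by ring
    linarith [h4, h5, h6, h7, h8]

lemma aux12_impulse_nonneg (ω : ℝ × ℝ → ℝ) : 0 ≤ impulse ω := by
  apply MeasureTheory.setIntegral_nonneg_of_ae_restrict
  filter_upwards [MeasureTheory.ae_restrict_mem aux12_H_meas] with y hy
  exact mul_nonneg (le_of_lt hy) (abs_nonneg _)

lemma aux12_heightBound (ω : ℝ × ℝ → ℝ) (hmeas : Measurable ω)
    (hbd : ∀ᵐ x ∂volume.restrict H, 0 ≤ ω x ∧ ω x ≤ 1)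
    (hInt : Integrable ω (volume.restrict H))
    (hImp : Integrable (fun x : ℝ × ℝ => x.2 * |ω x|) (volume.restrict H))
    {W : ℝ} (hW : 0 < W) {x : ℝ × ℝ} (hx : x ∈ H)
    (hT : max (8 * (norm1 ω + 1) / W) (1156 * (2 * impulse ω + 1) / W ^ 2) ≤ x.2) :
    Gpot ω x ≤ W * x.2 := by
  have hx2 : 0 < x.2 := hx
  set N := norm1 ω with hN
  set P := impulse ω with hP
  have hPnn : 0 ≤ P := aux12_impulse_nonneg ω
  have hNnn : 0 ≤ N := aux12_norm1_nonneg ω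
  set q := 2 * P + 1 with hq
  have hqpos : 0 < q := by linarith
  have hδ : 0 < x.2 / 2 := by positivity
  have hρpos : 0 < Real.sqrt (q / x.2) := Real.sqrt_pos.2 (by positivity)
  set ρ := Real.sqrt (q / x.2) with hρ
  have hmain := aux12_Gpot_main ω hmeas hbd hInt hx hδ hρpos
  set mB := ∫ y in H ∩ Metric.ball x (x.2 / 2), ω y with hmB
  -- bound the mass near x using the impulse
  have hmB_le : mB ≤ q / x.2 := by
    have step1 : mB ≤ ∫ y in H ∩ Metric.ball x (x.2 / 2), (2 / x.2) * (y.2 * |ω y|) := by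
      apply MeasureTheory.integral_mono_ae
        (MeasureTheory.IntegrableOn.mono_set hInt Set.inter_subset_left)
        (((MeasureTheory.IntegrableOn.mono_set hImp Set.inter_subset_left)).const_mul _)
      filter_upwards [MeasureTheory.ae_restrict_mem (aux12_H_meas.inter measurableSet_ball)]
        with y hy
      have hd : dist y x < x.2 / 2 := Metric.mem_ball.1 hy.2
      have hd2 : dist y.2 x.2 < x.2 / 2 :=
        lt_of_le_of_lt (le_trans (le_max_right _ _) (le_of_eq Prod.dist_eq.symm)) hd
      rw [Real.dist_eq, abs_sub_lt_iff] at hd2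
      have hy2 : x.2 / 2 < y.2 := by linarith [hd2.2]
      have h1 : (1:ℝ) ≤ (2 / x.2) * y.2 := by
        rw [div_mul_eq_mul_div, le_div_iff₀ hx2]
        linarith
      calc ω y ≤ |ω y| := le_abs_self _
        _ = 1 * |ω y| := (one_mul _).symm
        _ ≤ ((2 / x.2) * y.2) * |ω y| := mul_le_mul_of_nonneg_right h1 (abs_nonneg _)
        _ = (2 / x.2) * (y.2 * |ω y|) := by ring
    have step2 : ∫ y in H ∩ Metric.ball x (x.2 / 2), (2 / x.2) * (y.2 * |ω y|)
        ≤ (2 / x.2) * P := by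
      rw [MeasureTheory.integral_const_mul]
      apply mul_le_mul_of_nonneg_left ?_ (by positivity)
      apply MeasureTheory.setIntegral_mono_set hImp ?_
        (Filter.Eventually.of_forall Set.inter_subset_left)
      filter_upwards [MeasureTheory.ae_restrict_mem aux12_H_meas] with y hy
      exact mul_nonneg (le_of_lt hy) (abs_nonneg _)
    have : (2 / x.2) * P ≤ q / x.2 := by
      rw [hq, div_mul_eq_mul_div, div_le_div_iff₀ hx2 hx2]
      nlinarith
    linarith
  have hρsq : ρ ^ 2 = q / x.2 := Real.sq_sqrt (by positivity)
  have hterm3 : x.2 / ρ * mB ≤ x.2 * ρ := by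
    calc x.2 / ρ * mB ≤ x.2 / ρ * (q / x.2) :=
          mul_le_mul_of_nonneg_left hmB_le (by positivity)
      _ = x.2 / ρ * ρ ^ 2 := by rw [hρsq]
      _ = x.2 * ρ := by field_simp
  have hfar : x.2 / (x.2 / 2) * N = 2 * N := by field_simp
  have hGle : Gpot ω x ≤ 2 * N + 17 * (x.2 * ρ) := by
    have := le_trans (le_abs_self _) hmain
    rw [hfar] at this
    linarith
  have hxρ : x.2 * ρ = Real.sqrt (q * x.2) := by
    rw [hρ, show x.2 * Real.sqrt (q / x.2) = Real.sqrt (x.2 ^ 2) * Real.sqrt (q / x.2) by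
      rw [Real.sqrt_sq hx2.le], ← Real.sqrt_mul (by positivity)]
    congr 1
    field_simp
  have hT1 : 8 * (N + 1) / W ≤ x.2 := le_trans (le_max_left _ _) hT
  have hT2 : 1156 * q / W ^ 2 ≤ x.2 := by
    have := le_trans (le_max_right _ _) hT
    rwa [hq] at this ⊢
  have hA : 2 * N ≤ W * x.2 / 2 := by
    rw [div_le_iff₀ hW] at hT1
    nlinarith
  have hB : 17 * Real.sqrt (q * x.2) ≤ W * x.2 / 2 := by
    have h1 : q * x.2 ≤ (W * x.2 / 34) ^ 2 := by
      rw [div_le_iff₀ (by positivity : (0:ℝ) < W ^ 2)] at hT2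
      nlinarith
    have h2 : Real.sqrt (q * x.2) ≤ W * x.2 / 34 := by
      calc Real.sqrt (q * x.2) ≤ Real.sqrt ((W * x.2 / 34) ^ 2) := Real.sqrt_le_sqrt h1
        _ = W * x.2 / 34 := Real.sqrt_sq (by positivity)
    linarith
  rw [hxρ] at hGle
  linarith

lemma aux12_partB (ω : ℝ × ℝ → ℝ) (hmeas : Measurable ω)
    (hbd : ∀ᵐ x ∂volume.restrict H, 0 ≤ ω x ∧ ω x ≤ 1)
    (hInt : Integrable ω (volume.restrict H))
    (hImp : Integrable (fun x : ℝ × ℝ => x.2 * |ω x|) (volume.restrict H))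
    {W : ℝ} (hW : 0 < W) :
    Bornology.IsBounded {x ∈ H | 0 < Gpot ω x - W * x.2} := by
  set N := norm1 ω with hN
  have hNnn : 0 ≤ N := aux12_norm1_nonneg ω
  set T := max (8 * (norm1 ω + 1) / W) (1156 * (2 * impulse ω + 1) / W ^ 2) with hT
  set ε₀ : ℝ := 36 * (N + 1) / W with hε₀
  have hε₀pos : 0 < ε₀ := by rw [hε₀]; positivity
  have hE3pos : 0 < ε₀ ^ ((1:ℝ)/3) := Real.rpow_pos_of_pos hε₀pos _
  set c₀ : ℝ := (W / (36 * ε₀ ^ ((1:ℝ)/3))) ^ 3 with hc₀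
  have hc₀pos : 0 < c₀ := by rw [hc₀]; positivity
  -- finite measure with density ω
  set μ' := (volume.restrict H).withDensity (fun y => ENNReal.ofReal (ω y)) with hμ'
  set E : ℕ → Set (ℝ × ℝ) := fun n => {y : ℝ × ℝ | (n:ℝ) < |y.1|} with hE
  have hEmeas : ∀ n, MeasurableSet (E n) :=
    fun n => measurableSet_lt measurable_const measurable_fst.abs
  have hEanti : Antitone E := by
    intro a b hab y hy
    have : (a:ℝ) ≤ (b:ℝ) := Nat.cast_le.2 hab
    exact lt_of_le_of_lt this hy
  have hfin : μ' (E 0) ≠ ⊤ := by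
    have h1 : μ' (E 0) ≤ μ' Set.univ := measure_mono (Set.subset_univ _)
    have h2 : μ' Set.univ = ENNReal.ofReal (∫ y in H, ω y) := by
      rw [hμ', MeasureTheory.withDensity_apply _ MeasurableSet.univ,
        MeasureTheory.Measure.restrict_univ,
        MeasureTheory.ofReal_integral_eq_lintegral_ofReal hInt (hbd.mono fun y h => h.1)]
    rw [h2] at h1
    exact ne_top_of_le_ne_top ENNReal.ofReal_ne_top h1
  have hInter : ⋂ n, E n = ∅ := by
    ext y
    simp only [Set.mem_iInter, Set.mem_empty_iff_false, iff_false, not_forall]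
    obtain ⟨n, hn⟩ := exists_nat_gt |y.1|
    exact ⟨n, by simp [hE]; linarith⟩
  have htend : Filter.Tendsto (fun n => μ' (E n)) Filter.atTop (𝓝 0) := by
    have := MeasureTheory.tendsto_measure_iInter_atTop
      (fun n => (hEmeas n).nullMeasurableSet) hEanti ⟨0, hfin⟩
    rwa [hInter, measure_empty] at this
  obtain ⟨n, hn⟩ : ∃ n, μ' (E n) < ENNReal.ofReal c₀ :=
    ((htend.eventually_lt_const (ENNReal.ofReal_pos.2 hc₀pos)).exists)
  -- horizontal exclusion
  have hhor : ∀ x ∈ H, (n:ℝ) + ε₀ < |x.1| → ¬ (0 < Gpot ω x - W * x.2) := by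
    intro x hxH hfar hcon
    have hx2 : 0 < x.2 := hxH
    set S := (Set.Ioo (x.1 - ε₀) (x.1 + ε₀)) ×ˢ (Set.Ioi (0 : ℝ)) with hS
    set m := ∫ y in S, ω y with hm
    have hSH : S ⊆ H := fun y hy => hy.2
    have hSmeas : MeasurableSet S := measurableSet_Ioo.prod measurableSet_Ioi
    have hIntS : MeasureTheory.IntegrableOn ω S volume :=
      MeasureTheory.IntegrableOn.mono_set hInt hSH
    have hbdnnS : ∀ᵐ y ∂volume.restrict S, 0 ≤ ω y :=
      MeasureTheory.ae_restrict_of_ae_restrict_of_subset hSH (hbd.mono fun y h => h.1)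
    have hmnn : 0 ≤ m := MeasureTheory.setIntegral_nonneg_of_ae_restrict hbdnnS
    -- m is large
    have hA := aux12_partA ω hmeas hbd hInt hε₀pos hxH
    rw [← hS, ← hm] at hA
    have hWx : W * x.2 < Gpot ω x := by linarith
    have h18 : 18 * ε₀⁻¹ * N ≤ W / 2 := by
      have h : ε₀⁻¹ = W / (36 * (N + 1)) := by rw [hε₀, inv_div]
      rw [h]
      have hN1 : (0:ℝ) < N + 1 := by linarith
      have key : 18 * (W / (36 * (N + 1))) * N = (W * N) / (2 * (N + 1)) := by
        field_simp
        ring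
      rw [key, div_le_div_iff₀ (by linarith) (by norm_num : (0:ℝ) < 2)]
      nlinarith
    have hchain : W * x.2 < (W/2) * x.2 + 18 * x.2 * (ε₀ ^ ((1:ℝ)/3) * m ^ ((1:ℝ)/3)) := by
      have h1 : Gpot ω x ≤ |Gpot ω x| := le_abs_self _
      have h2 : 18 * x.2 * (ε₀⁻¹ * N) ≤ (W/2) * x.2 := by nlinarith
      nlinarith [hA]
    have hdiv : W / 2 < 18 * (ε₀ ^ ((1:ℝ)/3) * m ^ ((1:ℝ)/3)) := by
      have := (mul_lt_mul_iff_left₀ hx2).1 (by nlinarith : (W/2) * x.2 <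
        (18 * (ε₀ ^ ((1:ℝ)/3) * m ^ ((1:ℝ)/3))) * x.2)
      exact this
    have hm3 : W / (36 * ε₀ ^ ((1:ℝ)/3)) < m ^ ((1:ℝ)/3) := by
      rw [div_lt_iff₀ (by positivity)]
      nlinarith [Real.rpow_nonneg hmnn ((1:ℝ)/3)]
    have hcube : (m ^ ((1:ℝ)/3)) ^ (3:ℕ) = m := by
      rw [← Real.rpow_natCast (m ^ ((1:ℝ)/3)) 3, ← Real.rpow_mul hmnn]
      norm_num
    have hc₀m : c₀ < m := by
      rw [hc₀, ← hcube]
      exact pow_lt_pow_left₀ hm3 (by positivity) (by norm_num)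
    -- m is small
    have hSE : S ⊆ E n := by
      intro y hy
      have h1 : |y.1 - x.1| < ε₀ := by
        have := hy.1
        rw [Set.mem_Ioo] at this
        rw [abs_sub_lt_iff]
        constructor <;> linarith [this.1, this.2]
      have h2 : |x.1| - |y.1| ≤ |y.1 - x.1| := by
        have := abs_sub_abs_le_abs_sub x.1 y.1
        rwa [abs_sub_comm] at this
      show (n:ℝ) < |y.1|
      linarith
    have hsmall : ENNReal.ofReal m ≤ μ' (E n) := by
      rw [MeasureTheory.ofReal_integral_eq_lintegral_ofReal hIntS hbdnnS]
      rw [hμ', MeasureTheory.withDensity_apply _ (hEmeas n)]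
      have hres : (volume.restrict H).restrict S = volume.restrict S := by
        rw [MeasureTheory.Measure.restrict_restrict hSmeas,
          Set.inter_eq_self_of_subset_left hSH]
      calc ∫⁻ y in S, ENNReal.ofReal (ω y) ∂volume
          = ∫⁻ y in S, ENNReal.ofReal (ω y) ∂(volume.restrict H) := by rw [hres]
        _ ≤ ∫⁻ y in E n, ENNReal.ofReal (ω y) ∂(volume.restrict H) :=
            MeasureTheory.lintegral_mono' (MeasureTheory.Measure.restrict_mono hSE le_rfl)
              (le_refl _)
    have : ENNReal.ofReal m < ENNReal.ofReal c₀ := lt_of_le_of_lt hsmall hn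
    rw [ENNReal.ofReal_lt_ofReal_iff hc₀pos] at this
    linarith
  -- conclusion
  apply Bornology.IsBounded.subset
    (Bornology.IsBounded.prod (Metric.isBounded_Icc (-(n + ε₀)) (n + ε₀))
      (Metric.isBounded_Icc 0 T))
  intro x hxmem
  obtain ⟨hxH, hxpos⟩ := hxmem
  have hx2 : 0 < x.2 := hxH
  have h1 : |x.1| ≤ (n:ℝ) + ε₀ := by
    by_contra hcon
    push_neg at hcon
    exact hhor x hxH hcon hxpos
  have h2 : x.2 ≤ T := by
    by_contra hcon
    push_neg at hcon
    have := aux12_heightBound ω hmeas hbd hInt hImp hW hxH (le_of_lt hcon)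
    linarith
  constructor
  · rw [Set.mem_Icc]
    exact abs_le.1 h1
  · exact Set.mem_Icc.2 ⟨hx2.le, h2⟩

/-- (a) pointwise strip bound for the potential of a bounded density,
and (b) boundedness of the positivity set `{𝒢[ω] − W x₂ > 0}` when the impulse is
finite. -/
theorem gpot_strip_bound_and_bounded_level_set :
    ∃ C : ℝ, 0 < C ∧ ∀ ω : ℝ × ℝ → ℝ,
      Measurable ω →
      (∀ᵐ x ∂volume.restrict H, 0 ≤ ω x ∧ ω x ≤ 1) →
      Integrable ω (volume.restrict H) →
      (∀ ε : ℝ, 0 < ε → ∀ x ∈ H,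
        |Gpot ω x| ≤ C * x.2 * (ε⁻¹ * norm1 ω +
          ε ^ ((1 : ℝ) / 3) *
            (∫ y in (Set.Ioo (x.1 - ε) (x.1 + ε)) ×ˢ (Set.Ioi (0 : ℝ)), ω y) ^ ((1 : ℝ) / 3))) ∧
      (ImpulseFinite ω → ∀ W : ℝ, 0 < W →
        Bornology.IsBounded {x ∈ H | 0 < Gpot ω x - W * x.2}) := by
  refine ⟨18, by norm_num, fun ω hmeas hbd hInt =>
    ⟨fun ε hε x hx => aux12_partA ω hmeas hbd hInt hε hx,
     fun hImp W hW => aux12_partB ω hmeas hbd hInt hImp hW⟩⟩
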